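/- arXiv:1204.2921 — 2 statements merged into one kernel-verified Lean document; each statement's English description precedes it below -/
import Mathlib

section
/- Under the hypotheses of the previous theorem (|f'|^q h-concave on [a,b], p, q > 1 conjugate, h nonnegative super-additive with h(t) ≥ t and h(1/2) > 0), setting x = (a+b)/2 gives: |f((a+b)/2) - (1/(b-a))∫ₐᵇ f(u) du| ≤ ((b-a)/(2^{(2q+1)/q}·(p+1)^{1/p}·h(1/2)^{1/q}))·[|f'((3a+b)/4)| + |f'((a+3b)/4)|]. -/
/-!
Integrating by parts against the Montgomery kernel (`u - a` on `[a, m]`, `u - b` on `[m, b]`,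
with `m = (a + b) / 2`) writes `(b - a) (f m - mean f)` as the sum of two weighted integrals of
`f'`. Hölder's inequality bounds each by `‖u - s‖_p ‖f'‖_q` on its half, and the `h`-concavity of
`|f'|^q` at `t = 1/2`, integrated against its reflection `u ↦ c + d - u`, gives the
Hermite–Hadamard bound `2 h(1/2) ∫_c^d |f'|^q ≤ (d - c) |f'((c + d) / 2)|^q`.
-/

open MeasureTheory Set

def HConcaveOn (h g : ℝ → ℝ) (s : Set ℝ) : Prop :=
  ∀ y ∈ s, ∀ z ∈ s, ∀ t ∈ Icc (0:ℝ) 1, h t * g y + h (1 - t) * g z ≤ g (t * y + (1 - t) * z)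

lemma HConcaveOn.half_mul_add_reflect_le {h g : ℝ → ℝ} {s : Set ℝ} (hg : HConcaveOn h g s)
    {c d : ℝ} (hcd : Icc c d ⊆ s) {u : ℝ} (hu : u ∈ Icc c d) :
    h (1 / 2) * (g u + g (c + d - u)) ≤ g ((c + d) / 2) := by
  have hu' : c + d - u ∈ Icc c d := ⟨by linarith [hu.2], by linarith [hu.1]⟩
  have := hg u (hcd hu) (c + d - u) (hcd hu') (1 / 2) ⟨by norm_num, by norm_num⟩
  convert this using 2 <;> ring_nf

lemma aestronglyMeasurable_of_hasDerivAt {f f' : ℝ → ℝ} {s : Set ℝ} (hs : MeasurableSet s)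
    (hf : ∀ y ∈ s, HasDerivAt f (f' y) y) : AEStronglyMeasurable f' (volume.restrict s) :=
  (measurable_deriv f).aestronglyMeasurable.congr
    (ae_restrict_of_forall_mem hs fun y hy => (hf y hy).deriv)

lemma integral_le_of_half_mul_add_reflect_le {g : ℝ → ℝ} {c d κ : ℝ} (hcd : c ≤ d)
    (hg : IntervalIntegrable g volume c d)
    (hmid : ∀ u ∈ Icc c d, κ * (g u + g (c + d - u)) ≤ g ((c + d) / 2)) :
    2 * κ * ∫ u in c..d, g u ≤ (d - c) * g ((c + d) / 2) := by
  have hreflect : ∫ u in c..d, g (c + d - u) = ∫ u in c..d, g u := by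
    simp [intervalIntegral.integral_comp_sub_left]
  have hg' : IntervalIntegrable (fun u => g (c + d - u)) volume c d := by
    simpa using hg.comp_sub_left (c + d) |>.symm
  calc 2 * κ * ∫ u in c..d, g u = ∫ u in c..d, κ * (g u + g (c + d - u)) := by
        rw [intervalIntegral.integral_const_mul, intervalIntegral.integral_add hg hg', hreflect]
        ring
    _ ≤ ∫ _ in c..d, g ((c + d) / 2) :=
        intervalIntegral.integral_mono_on hcd ((hg.add hg').const_mul κ)
          intervalIntegrable_const hmid
    _ = (d - c) * g ((c + d) / 2) := by simp

section Midpoint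

variable {φ : ℝ → ℝ} {c d κ q : ℝ}

lemma abs_le_of_half_mul_add_reflect_le (hq : 0 < q) (hκ : 0 < κ)
    (hmid : ∀ u ∈ Icc c d, κ * (|φ u| ^ q + |φ (c + d - u)| ^ q) ≤ |φ ((c + d) / 2)| ^ q)
    {u : ℝ} (hu : u ∈ Icc c d) : |φ u| ≤ (|φ ((c + d) / 2)| ^ q / κ) ^ (1 / q) := by
  have hpow : |φ u| ^ q ≤ |φ ((c + d) / 2)| ^ q / κ := by
    rw [le_div_iff₀' hκ]
    nlinarith [hmid u hu, Real.rpow_nonneg (abs_nonneg (φ (c + d - u))) q]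
  calc |φ u| = (|φ u| ^ q) ^ (1 / q) := by
        rw [← Real.rpow_mul (abs_nonneg _), mul_one_div_cancel hq.ne', Real.rpow_one]
    _ ≤ _ := by gcongr

lemma memLp_of_half_mul_add_reflect_le (hq : 0 < q) (hκ : 0 < κ) (r : ENNReal)
    (hφ : AEStronglyMeasurable φ (volume.restrict (Ioc c d)))
    (hmid : ∀ u ∈ Icc c d, κ * (|φ u| ^ q + |φ (c + d - u)| ^ q) ≤ |φ ((c + d) / 2)| ^ q) :
    MemLp φ r (volume.restrict (Ioc c d)) :=
  MemLp.of_bound hφ _ <| ae_restrict_of_forall_mem measurableSet_Ioc fun _ hu =>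
    abs_le_of_half_mul_add_reflect_le hq hκ hmid (Ioc_subset_Icc_self hu)

end Midpoint

lemma abs_intervalIntegral_mul_le_Lp_mul_Lq {p q c d : ℝ} (hpq : p.HolderConjugate q)
    (hcd : c ≤ d) {w φ : ℝ → ℝ} (hw : MemLp w (ENNReal.ofReal p) (volume.restrict (Ioc c d)))
    (hφ : MemLp φ (ENNReal.ofReal q) (volume.restrict (Ioc c d))) :
    |∫ u in c..d, w u * φ u| ≤
      (∫ u in c..d, |w u| ^ p) ^ (1 / p) * (∫ u in c..d, |φ u| ^ q) ^ (1 / q) := by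
  calc |∫ u in c..d, w u * φ u| ≤ ∫ u in c..d, |w u * φ u| :=
        intervalIntegral.abs_integral_le_integral_abs hcd
    _ ≤ _ := by
        simp only [intervalIntegral.integral_of_le hcd, abs_mul, ← Real.norm_eq_abs]
        exact integral_mul_norm_le_Lp_mul_Lq hpq hw hφ

lemma integral_abs_sub_rpow {c d p s : ℝ} (hcd : c ≤ d) (hp : -1 < p) (hs : s = c ∨ s = d) :
    ∫ u in c..d, |u - s| ^ p = (d - c) ^ (p + 1) / (p + 1) := by
  have hzero : ∫ x in (0:ℝ)..(d - c), |x| ^ p = (d - c) ^ (p + 1) / (p + 1) := by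
    rw [intervalIntegral.integral_congr (g := fun x => x ^ p) fun x hx => by
        rw [uIcc_of_le (by linarith)] at hx; simp only [abs_of_nonneg hx.1],
      integral_rpow (Or.inl hp), Real.zero_rpow (by linarith), sub_zero]
  rcases hs with rfl | rfl
  · rw [intervalIntegral.integral_comp_sub_right (fun x => |x| ^ p), sub_self, hzero]
  · simp_rw [abs_sub_comm _ s]
    rw [intervalIntegral.integral_comp_sub_left (fun x => |x| ^ p), sub_self, hzero]

lemma rpow_div_mul_rpow_div_eq {p q L K x : ℝ} (hpq : p.HolderConjugate q) (hL : 0 ≤ L)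
    (hK : 0 < K) (hx : 0 ≤ x) :
    (L ^ (p + 1) / (p + 1)) ^ (1 / p) * (L * x ^ q / K) ^ (1 / q) =
      L ^ 2 / ((p + 1) ^ (1 / p) * K ^ (1 / q)) * x := by
  have hp := hpq.pos
  have hexp : (p + 1) * (1 / p) + 1 / q = 2 := by
    rw [add_mul, mul_one_div_cancel hp.ne', one_mul]
    linarith [hpq.one_div_add_one_div]
  have hLpow : L ^ ((p + 1) * (1 / p)) * L ^ (1 / q) = L ^ 2 := by
    rw [← Real.rpow_add' hL (by rw [hexp]; norm_num), hexp]; norm_num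
  have hxpow : (x ^ q) ^ (1 / q) = x := by
    rw [← Real.rpow_mul hx, mul_one_div_cancel hpq.symm.pos.ne', Real.rpow_one]
  rw [Real.div_rpow (by positivity) (by linarith), Real.div_rpow (by positivity) hK.le,
    Real.mul_rpow hL (by positivity), ← Real.rpow_mul hL, hxpow, ← hLpow]
  ring

lemma abs_integral_sub_mul_le {p q c d s κ : ℝ} {φ : ℝ → ℝ} (hpq : p.HolderConjugate q)
    (hcd : c ≤ d) (hκ : 0 < κ) (hs : s = c ∨ s = d)
    (hφ : AEStronglyMeasurable φ (volume.restrict (Ioc c d)))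
    (hmid : ∀ u ∈ Icc c d, κ * (|φ u| ^ q + |φ (c + d - u)| ^ q) ≤ |φ ((c + d) / 2)| ^ q) :
    |∫ u in c..d, (u - s) * φ u| ≤
      (d - c) ^ 2 / ((p + 1) ^ (1 / p) * (2 * κ) ^ (1 / q)) * |φ ((c + d) / 2)| := by
  have hq := hpq.symm.pos
  have hw : MemLp (fun u => u - s) (ENNReal.ofReal p) (volume.restrict (Ioc c d)) :=
    MemLp.of_bound (continuous_sub_right s).aestronglyMeasurable (d - c) <|
      ae_restrict_of_forall_mem measurableSet_Ioc fun u hu => by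
        rw [Real.norm_eq_abs, abs_le]
        rcases hs with rfl | rfl <;> constructor <;> linarith [hu.1, hu.2]
  have hφq : IntervalIntegrable (fun u => |φ u| ^ q) volume c d := by
    rw [intervalIntegrable_iff_integrableOn_Ioc_of_le hcd, IntegrableOn]
    simpa [ENNReal.toReal_ofReal hq.le] using
      (memLp_of_half_mul_add_reflect_le hq hκ (ENNReal.ofReal q) hφ hmid).integrable_norm_rpow'
  have hHH : ∫ u in c..d, |φ u| ^ q ≤ (d - c) * |φ ((c + d) / 2)| ^ q / (2 * κ) := by
    rw [le_div_iff₀' (mul_pos two_pos hκ)]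
    exact integral_le_of_half_mul_add_reflect_le hcd hφq hmid
  calc |∫ u in c..d, (u - s) * φ u|
      ≤ (∫ u in c..d, |u - s| ^ p) ^ (1 / p) * (∫ u in c..d, |φ u| ^ q) ^ (1 / q) :=
        abs_intervalIntegral_mul_le_Lp_mul_Lq hpq hcd hw
          (memLp_of_half_mul_add_reflect_le hq hκ _ hφ hmid)
    _ ≤ ((d - c) ^ (p + 1) / (p + 1)) ^ (1 / p) *
          ((d - c) * |φ ((c + d) / 2)| ^ q / (2 * κ)) ^ (1 / q) := by
        rw [integral_abs_sub_rpow hcd (by linarith [hpq.pos]) hs]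
        gcongr
        · exact Real.rpow_nonneg (div_nonneg (Real.rpow_nonneg (sub_nonneg.2 hcd) _)
            (by linarith [hpq.pos])) _
        · exact intervalIntegral.integral_nonneg hcd fun u _ => by positivity
    _ = _ := rpow_div_mul_rpow_div_eq hpq (by linarith) (mul_pos two_pos hκ) (abs_nonneg _)

lemma integral_sub_mul_deriv_eq {f f' : ℝ → ℝ} {c d s : ℝ}
    (hf : ∀ y ∈ uIcc c d, HasDerivAt f (f' y) y) (hf' : IntervalIntegrable f' volume c d) :
    ∫ u in c..d, (u - s) * f' u = (d - s) * f d - (c - s) * f c - ∫ u in c..d, f u := by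
  simpa using intervalIntegral.integral_mul_deriv_eq_deriv_mul
    (fun y _ => (hasDerivAt_id y).sub_const s) hf intervalIntegrable_const hf'

lemma mul_sub_integral_eq_integral_kernel {f f' : ℝ → ℝ} {a b x : ℝ} (hx : x ∈ Icc a b)
    (hf : ∀ y ∈ Icc a b, HasDerivAt f (f' y) y) (hf' : IntervalIntegrable f' volume a b) :
    (b - a) * f x - ∫ u in a..b, f u =
      (∫ u in a..x, (u - a) * f' u) + ∫ u in x..b, (u - b) * f' u := by
  have hax : uIcc a x ⊆ uIcc a b := uIcc_subset_uIcc_left (mem_uIcc_of_le hx.1 hx.2)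
  have hxb : uIcc x b ⊆ uIcc a b := uIcc_subset_uIcc_right (mem_uIcc_of_le hx.1 hx.2)
  have hf₀ : ∀ y ∈ uIcc a b, HasDerivAt f (f' y) y := by
    rwa [uIcc_of_le (hx.1.trans hx.2)]
  have hfc : ContinuousOn f (uIcc a b) := fun y hy =>
    (hf₀ y hy).continuousAt.continuousWithinAt
  rw [integral_sub_mul_deriv_eq (fun y hy => hf₀ y (hax hy)) (hf'.mono_set hax),
    integral_sub_mul_deriv_eq (fun y hy => hf₀ y (hxb hy)) (hf'.mono_set hxb),
    ← intervalIntegral.integral_add_adjacent_intervals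
      (hfc.mono hax).intervalIntegrable (hfc.mono hxb).intervalIntegrable]
  ring

theorem ostrowski_h_concave_midpoint_general
    (h : ℝ → ℝ) (f f' : ℝ → ℝ) (a b p q : ℝ) (hab : a < b)
    (hp : 1 < p) (hpq : 1 / p + 1 / q = 1)
    (hh_half : 0 < h (1 / 2))
    (hderiv : ∀ y ∈ Set.Icc a b, HasDerivAt f (f' y) y)
    (hconc : ∀ y ∈ Set.Icc a b, ∀ z ∈ Set.Icc a b, ∀ t ∈ Set.Icc (0:ℝ) 1,
      h t * |f' y| ^ q + h (1 - t) * |f' z| ^ q ≤ |f' (t * y + (1 - t) * z)| ^ q) :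
    |f ((a + b) / 2) - (1 / (b - a)) * ∫ u in a..b, f u| ≤
      ((b - a) / ((2:ℝ) ^ ((2 * q + 1) / q) * (p + 1) ^ (1 / p) * h (1 / 2) ^ (1 / q))) *
        (|f' ((3 * a + b) / 4)| + |f' ((a + 3 * b) / 4)|) := by
  have hpq' : p.HolderConjugate q := Real.holderConjugate_iff.2 ⟨hp, by simpa using hpq⟩
  have hm : (a + b) / 2 ∈ Icc a b := ⟨by linarith, by linarith⟩
  set m := (a + b) / 2
  have hmeas : ∀ {c d}, Icc c d ⊆ Icc a b → AEStronglyMeasurable f' (volume.restrict (Ioc c d)) :=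
    fun hcd => aestronglyMeasurable_of_hasDerivAt measurableSet_Ioc fun y hy =>
      hderiv y (hcd (Ioc_subset_Icc_self hy))
  have hmid : ∀ {c d}, Icc c d ⊆ Icc a b → ∀ u ∈ Icc c d,
      h (1 / 2) * (|f' u| ^ q + |f' (c + d - u)| ^ q) ≤ |f' ((c + d) / 2)| ^ q :=
    fun hcd _ hu => HConcaveOn.half_mul_add_reflect_le hconc hcd hu
  have hint : IntervalIntegrable f' volume a b := by
    rw [intervalIntegrable_iff_integrableOn_Ioc_of_le hab.le, IntegrableOn,
      ← memLp_one_iff_integrable]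
    exact memLp_of_half_mul_add_reflect_le hpq'.symm.pos hh_half 1 (hmeas subset_rfl)
      (hmid subset_rfl)
  have hleft := abs_integral_sub_mul_le hpq' hm.1 hh_half (Or.inl rfl)
    (hmeas (Icc_subset_Icc_right hm.2)) (hmid (Icc_subset_Icc_right hm.2))
  have hright := abs_integral_sub_mul_le hpq' hm.2 hh_half (Or.inr rfl)
    (hmeas (Icc_subset_Icc_left hm.1)) (hmid (Icc_subset_Icc_left hm.1))
  have hconst : (2:ℝ) ^ ((2 * q + 1) / q) * (p + 1) ^ (1 / p) * h (1 / 2) ^ (1 / q) =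
      4 * ((p + 1) ^ (1 / p) * (2 * h (1 / 2)) ^ (1 / q)) := by
    rw [Real.mul_rpow zero_le_two hh_half.le, show (2 * q + 1) / q = 2 + 1 / q by
      field_simp [hpq'.symm.pos.ne'], Real.rpow_add two_pos]
    norm_num
    ring
  have hmean : f m - 1 / (b - a) * ∫ u in a..b, f u =
      ((b - a) * f m - ∫ u in a..b, f u) / (b - a) := by
    field_simp [sub_ne_zero.2 hab.ne']
  rw [hmean, mul_sub_integral_eq_integral_kernel hm hderiv hint, abs_div,
    abs_of_pos (sub_pos.2 hab), hconst, div_le_iff₀ (sub_pos.2 hab)]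
  calc _ ≤ _ := abs_add_le _ _
    _ ≤ _ := add_le_add hleft hright
    _ = _ := by
      rw [show (a + m) / 2 = (3 * a + b) / 4 by ring, show (m + b) / 2 = (a + 3 * b) / 4 by ring]
      field_simp
      ring

theorem ostrowski_h_concave_midpoint
    (h : ℝ → ℝ) (f f' : ℝ → ℝ) (a b p q : ℝ) (hab : a < b)
    (hp : 1 < p) (hq : 1 < q) (hpq : 1 / p + 1 / q = 1)
    (hh_nonneg : ∀ t, 0 ≤ t → 0 ≤ h t)
    (hh_superadd : ∀ s t, 0 ≤ s → 0 ≤ t → h s + h t ≤ h (s + t))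
    (hh_ge : ∀ t ∈ Set.Ioo (0:ℝ) 1, t ≤ h t)
    (hh_half : 0 < h (1 / 2))
    (hderiv : ∀ y ∈ Set.Icc a b, HasDerivAt f (f' y) y)
    (hint : IntervalIntegrable f' volume a b)
    (hconc : ∀ y ∈ Set.Icc a b, ∀ z ∈ Set.Icc a b, ∀ t ∈ Set.Icc (0:ℝ) 1,
      h t * |f' y| ^ q + h (1 - t) * |f' z| ^ q ≤ |f' (t * y + (1 - t) * z)| ^ q) :
    |f ((a + b) / 2) - (1 / (b - a)) * ∫ u in a..b, f u| ≤
      ((b - a) / ((2:ℝ) ^ ((2 * q + 1) / q) * (p + 1) ^ (1 / p) * h (1 / 2) ^ (1 / q))) *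
        (|f' ((3 * a + b) / 4)| + |f' ((a + 3 * b) / 4)|) :=
  ostrowski_h_concave_midpoint_general h f f' a b p q hab hp hpq hh_half hderiv hconc
end

section
/- Let 0 < a < b and n an integer with |n| ≥ 2, p ∈ (0,1), and let M be an upper bound for |n·xⁿ⁻¹| on [a,b]. Then |((a+b)/2)ⁿ - (bⁿ⁺¹ - aⁿ⁺¹)/((n+1)(b-a))| ≤ (M(b-a)/4)·[∫₀¹ (1+t²)^{p-1} dt + ∫₀¹ (1+t-t²)^{p-1} dt]. -/
/-!
By the mean value theorem `|f c - f x| ≤ M |c - x|`, and integrating over `[a, b]` bounds the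
deviation of `f c` from the mean of `f` by `M ∫ |c - x| dx / (b - a)`, which is `M (b - a) / 4` at
the midpoint (Ostrowski). For `f x = x ^ n` the mean is `Lₙⁿ(a, b)`. The bracket is at least `1`:
both integrands are `g ^ (p - 1)` with `0 < g ≤ 2` and `p - 1 ∈ [-1, 0]`, hence at least `1 / 2`.
-/

open intervalIntegral MeasureTheory Set

theorem integral_abs_from_zero {d : ℝ} (hd : 0 ≤ d) : ∫ x in (0 : ℝ)..d, |x| = d ^ 2 / 2 := by
  rw [integral_congr (f := fun x => |x|) (g := fun x => x)
    fun x hx => abs_of_nonneg (by rw [uIcc_of_le hd] at hx; exact hx.1), integral_id]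
  ring

theorem integral_abs_sub_of_mem_Icc {a b c : ℝ} (hc : c ∈ Icc a b) :
    ∫ x in a..b, |c - x| = ((c - a) ^ 2 + (b - c) ^ 2) / 2 := by
  have hint : ∀ u v : ℝ, IntervalIntegrable (fun x => |c - x|) volume u v := fun u v =>
    (continuous_const.sub continuous_id).abs.intervalIntegrable u v
  have hleft : ∫ x in a..c, |c - x| = (c - a) ^ 2 / 2 := by
    rw [integral_comp_sub_left (fun x => |x|), sub_self, integral_abs_from_zero (by linarith [hc.1])]
  have hright : ∫ x in c..b, |c - x| = (b - c) ^ 2 / 2 := by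
    simp_rw [abs_sub_comm c]
    rw [integral_comp_sub_right (fun x => |x|), sub_self, integral_abs_from_zero (by linarith [hc.2])]
  rw [← integral_add_adjacent_intervals (hint a c) (hint c b), hleft, hright, add_div]

theorem abs_sub_average_le_of_abs_deriv_le {f f' : ℝ → ℝ} {a b c M : ℝ} (hab : a < b)
    (hf : ∀ x ∈ Icc a b, HasDerivWithinAt f (f' x) (Icc a b) x)
    (hf' : ∀ x ∈ Icc a b, |f' x| ≤ M) (hc : c ∈ Icc a b) :
    |f c - (∫ x in a..b, f x) / (b - a)| ≤ M * ((c - a) ^ 2 + (b - c) ^ 2) / (2 * (b - a)) := by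
  have hba : 0 < b - a := sub_pos.2 hab
  have hint : IntervalIntegrable f volume a b :=
    (ContinuousOn.mono (fun x hx => (hf x hx).continuousWithinAt)
      (uIcc_of_le hab.le).subset).intervalIntegrable
  have hlip : ∀ x ∈ Icc a b, |f c - f x| ≤ M * |c - x| := fun x hx => by
    simpa only [Real.norm_eq_abs] using (convex_Icc a b).norm_image_sub_le_of_norm_hasDerivWithin_le
      hf (fun y hy => by simpa only [Real.norm_eq_abs] using hf' y hy) hx hc
  have hdiff : f c - (∫ x in a..b, f x) / (b - a) = (∫ x in a..b, (f c - f x)) / (b - a) := by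
    rw [integral_sub intervalIntegrable_const hint, intervalIntegral.integral_const, smul_eq_mul]
    field_simp
  calc |f c - (∫ x in a..b, f x) / (b - a)|
      = |∫ x in a..b, (f c - f x)| / (b - a) := by rw [hdiff, abs_div, abs_of_pos hba]
    _ ≤ (∫ x in a..b, M * |c - x|) / (b - a) := by
      gcongr
      refine (abs_integral_le_integral_abs hab.le).trans (integral_mono_on hab.le ?_ ?_ hlip)
      · exact (intervalIntegrable_const.sub hint).abs
      · exact (continuous_const.mul (continuous_const.sub continuous_id).abs).intervalIntegrable a b
    _ = M * ((c - a) ^ 2 + (b - c) ^ 2) / (2 * (b - a)) := by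
      rw [intervalIntegral.integral_const_mul, integral_abs_sub_of_mem_Icc hc]
      field_simp

theorem abs_midpoint_sub_average_le_of_abs_deriv_le {f f' : ℝ → ℝ} {a b M : ℝ} (hab : a < b)
    (hf : ∀ x ∈ Icc a b, HasDerivWithinAt f (f' x) (Icc a b) x)
    (hf' : ∀ x ∈ Icc a b, |f' x| ≤ M) :
    |f ((a + b) / 2) - (∫ x in a..b, f x) / (b - a)| ≤ M * (b - a) / 4 := by
  have hmid : (a + b) / 2 ∈ Icc a b := ⟨by linarith, by linarith⟩
  refine (abs_sub_average_le_of_abs_deriv_le hab hf hf' hmid).trans_eq ?_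
  field_simp [(sub_pos.2 hab).ne']
  ring

theorem one_half_le_rpow_sub_one {x p : ℝ} (hx : 0 < x) (hx2 : x ≤ 2) (hp : p ∈ Icc (0 : ℝ) 1) :
    1 / 2 ≤ x ^ (p - 1) :=
  calc (1 : ℝ) / 2 = 2 ^ (-1 : ℝ) := by rw [Real.rpow_neg_one, one_div]
    _ ≤ 2 ^ (p - 1) := Real.rpow_le_rpow_of_exponent_le one_le_two (by linarith [hp.1])
    _ ≤ x ^ (p - 1) := Real.rpow_le_rpow_of_nonpos hx hx2 (by linarith [hp.2])

theorem half_sub_le_integral_rpow_sub_one {g : ℝ → ℝ} {a b p : ℝ} (hab : a ≤ b)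
    (hg : ContinuousOn g (Icc a b)) (hg0 : ∀ t ∈ Icc a b, 0 < g t) (hg2 : ∀ t ∈ Icc a b, g t ≤ 2)
    (hp : p ∈ Icc (0 : ℝ) 1) :
    (b - a) / 2 ≤ ∫ t in a..b, g t ^ (p - 1) := by
  have hint : IntervalIntegrable (fun t => g t ^ (p - 1)) volume a b := by
    refine ContinuousOn.intervalIntegrable ?_
    rw [uIcc_of_le hab]
    exact hg.rpow_const fun t ht => Or.inl (hg0 t ht).ne'
  have := integral_mono_on hab intervalIntegrable_const hint
    fun t ht => one_half_le_rpow_sub_one (hg0 t ht) (hg2 t ht) hp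
  rwa [intervalIntegral.integral_const, smul_eq_mul, ← div_eq_mul_one_div] at this

theorem means_inequality_h_convex
    (a b : ℝ) (ha : 0 < a) (hab : a < b)
    (n : ℤ) (hn : 2 ≤ |n|) (p : ℝ) (hp : p ∈ Set.Ioo (0:ℝ) 1)
    (M : ℝ) (hM : ∀ x ∈ Set.Icc a b, |(n : ℝ) * x ^ (n - 1)| ≤ M) :
    |((a + b) / 2) ^ n - (b ^ (n + 1) - a ^ (n + 1)) / ((n + 1) * (b - a))| ≤
      (M * (b - a) / 4) *
        ((∫ t in (0:ℝ)..1, (1 + t ^ 2) ^ (p - 1)) +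
         (∫ t in (0:ℝ)..1, (1 + t - t ^ 2) ^ (p - 1))) := by
  have hpos : ∀ x ∈ Icc a b, 0 < x := fun x hx => ha.trans_le hx.1
  have hn_ne : n ≠ -1 := by rintro rfl; norm_num at hn
  have hmean : (b ^ (n + 1) - a ^ (n + 1)) / ((n + 1) * (b - a)) = (∫ x in a..b, x ^ n) / (b - a) := by
    rw [integral_zpow (Or.inr ⟨hn_ne, fun h0 => (hpos 0 (uIcc_of_le hab.le ▸ h0)).false⟩), div_div]
  have hderiv : ∀ x ∈ Icc a b, HasDerivWithinAt (fun y : ℝ => y ^ n) (n * x ^ (n - 1)) (Icc a b) x :=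
    fun x hx => (hasDerivAt_zpow n x (Or.inl (hpos x hx).ne')).hasDerivWithinAt
  have hp' : p ∈ Icc (0 : ℝ) 1 := Ioo_subset_Icc_self hp
  have h₁ := half_sub_le_integral_rpow_sub_one zero_le_one (g := fun t => 1 + t ^ 2) (by fun_prop)
    (fun t _ => by positivity) (fun t ht => by nlinarith [ht.1, ht.2]) hp'
  have h₂ := half_sub_le_integral_rpow_sub_one zero_le_one (g := fun t => 1 + t - t ^ 2) (by fun_prop)
    (fun t ht => by nlinarith [ht.1, ht.2]) (fun t ht => by nlinarith [ht.1, ht.2]) hp'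
  have hM0 : 0 ≤ M := (abs_nonneg _).trans (hM a ⟨le_rfl, hab.le⟩)
  have hba : 0 < b - a := sub_pos.2 hab
  rw [hmean]
  refine (abs_midpoint_sub_average_le_of_abs_deriv_le hab hderiv hM).trans
    (le_mul_of_one_le_right (by positivity) (by linarith))
end
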